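/- arXiv:1510.07982 — 2 statements merged into one kernel-verified Lean document; each statement's English description precedes it below -/
import Mathlib

section
/- Let G be a graph of order n ≥ 2 with vertex set V = {1,…,n}, let {x,y} be an edge of G and let t ≥ 2 be an integer. Then the number of copies of {x,y} in S(G,t) whose x-endpoint has degree d(x) and whose y-endpoint has degree d(y)+1 is f_{S(G,t)}(d(x),d(y)+1) = n^{t−2}·(d(y) − τ(x,y)) − ψ(t−2)·d(x). -/
open Finset

/-- The generalized Sierpiński graph `S(G,t)` on words of length `t` over the vertex set. -/
def sierpinskiGraph {V : Type*} (G : SimpleGraph V) (t : ℕ) :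
    SimpleGraph (Fin t → V) where
  Adj u v := ∃ i : Fin t, (∀ j, j < i → u j = v j) ∧ u i ≠ v i ∧ G.Adj (u i) (v i) ∧
      ∀ j, i < j → u j = v i ∧ v j = u i
  symm := by
    constructor
    rintro u v ⟨i, h1, h2, h3, h4⟩
    exact ⟨i, fun j hj => (h1 j hj).symm, fun h => h2 h.symm, h3.symm,
      fun j hj => ⟨(h4 j hj).2, (h4 j hj).1⟩⟩
  loopless := by
    constructor
    rintro u ⟨i, _, h2, _⟩
    exact h2 rfl

instance {V : Type*} [Fintype V] [DecidableEq V] (G : SimpleGraph V) [DecidableRel G.Adj]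
    (t : ℕ) : DecidableRel (sierpinskiGraph G t).Adj := fun u v =>
  inferInstanceAs (Decidable (∃ i : Fin t, (∀ j, j < i → u j = v j) ∧ u i ≠ v i ∧
    G.Adj (u i) (v i) ∧ ∀ j, i < j → u j = v i ∧ v j = u i))

/-- The general Randić index `R_α`. -/
noncomputable def randic {V : Type*} [Fintype V] (G : SimpleGraph V) (α : ℝ) : ℝ := by
  classical
  exact ∑ e ∈ G.edgeFinset,
    Sym2.lift ⟨fun u v => ((G.degree u : ℝ) * (G.degree v : ℝ)) ^ α,
      fun u v => by dsimp only; rw [mul_comm]⟩ e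

/-- `τ(x,y)`: the number of triangles containing the adjacent vertices `x` and `y`. -/
def tau {V : Type*} [Fintype V] [DecidableEq V] (G : SimpleGraph V) [DecidableRel G.Adj]
    (x y : V) : ℕ := (G.neighborFinset x ∩ G.neighborFinset y).card

lemma tau_comm {V : Type*} [Fintype V] [DecidableEq V] (G : SimpleGraph V) [DecidableRel G.Adj]
    (x y : V) : tau G x y = tau G y x := by
  simp [tau, Finset.inter_comm]

/-- `ψ(t) = 1 + n + ⋯ + n^{t-1}`. -/
def psi (n t : ℕ) : ℕ := ∑ i ∈ Finset.range t, n ^ i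

/-- `τ(G)`: the number of triangles of `G`. -/
noncomputable def triangleCount {V : Type*} [Fintype V] (G : SimpleGraph V) : ℕ := by
  classical exact (G.cliqueFinset 3).card

/-- `u` is the `x`-endpoint and `v` the `y`-endpoint of a copy of the edge `{x,y}` in `S(G,t)`. -/
def isCopy {V : Type*} {t : ℕ} (x y : V) (u v : Fin t → V) : Prop :=
  ∃ i : Fin t, (∀ j, j < i → u j = v j) ∧ u i = x ∧ v i = y ∧ ∀ j, i < j → u j = y ∧ v j = x

instance {V : Type*} [DecidableEq V] {t : ℕ} (x y : V) (u v : Fin t → V) :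
    Decidable (isCopy x y u v) :=
  inferInstanceAs (Decidable (∃ i : Fin t, (∀ j, j < i → u j = v j) ∧ u i = x ∧ v i = y ∧
    ∀ j, i < j → u j = y ∧ v j = x))

/-- `f_{S(G,t)}(a,b)`: the number of copies of the edge `{x,y}` of `G` in `S(G,t)` whose
`x`-endpoint has degree `a` and whose `y`-endpoint has degree `b` in `S(G,t)`. -/
def copyCount {V : Type*} [Fintype V] [DecidableEq V] (G : SimpleGraph V) [DecidableRel G.Adj]
    (t : ℕ) (x y : V) (a b : ℕ) : ℕ :=
  (Finset.univ.filter fun p : (Fin t → V) × (Fin t → V) =>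
    isCopy x y p.1 p.2 ∧ (sierpinskiGraph G t).degree p.1 = a ∧
      (sierpinskiGraph G t).degree p.2 = b).card

/-!
A word `u = w z` of `S(G, t)` has the `d(z)` neighbours `w z'` with `z' ~ z`, plus exactly one more
when `w` ends in `c z ⋯ z` with `c ~ z`. A copy of `{x, y}` at a position before the last joins
`w x y ⋯ y` to `w y x ⋯ x`, both of which have that extra neighbour, so its degrees are
`(d(y) + 1, d(x) + 1)`, never `(d(x), d(y) + 1)`. The copies counted are thus the pairs `(w x, w y)`
with `w` of length `t - 1` ending in such a run for `y` but not for `x`. Splitting off the last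
letter of `w` reduces this to the number `d(z) ψ(s)` of words of length `s` ending in such a run
for `z`, which satisfies the same one-letter recursion.
-/

section Words

variable {V : Type*} (G : SimpleGraph V)

/-- `w` ends in `c z ⋯ z` (possibly with no `z`) where `c ~ z`: exactly when `w z` has a
neighbour in `S(G, s + 1)` outside its own last copy of `G`. -/
def EndsWithAdjRun (z : V) {s : ℕ} (w : Fin s → V) : Prop :=
  ∃ i, (∀ j, i < j → w j = z) ∧ G.Adj z (w i)

instance [DecidableEq V] [DecidableRel G.Adj] (z : V) {s : ℕ} (w : Fin s → V) :
    Decidable (EndsWithAdjRun G z w) :=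
  inferInstanceAs (Decidable (∃ i, (∀ j, i < j → w j = z) ∧ G.Adj z (w i)))

lemma endsWithAdjRun_index_unique {z : V} {s : ℕ} {w : Fin s → V} {i i' : Fin s}
    (hi : (∀ j, i < j → w j = z) ∧ G.Adj z (w i))
    (hi' : (∀ j, i' < j → w j = z) ∧ G.Adj z (w i')) : i = i' := by
  by_contra hne
  rcases lt_or_gt_of_ne hne with h | h
  · exact hi'.2.ne (hi.1 i' h).symm
  · exact hi.2.ne (hi'.1 i h).symm

lemma endsWithAdjRun_snoc (z : V) {s : ℕ} (w : Fin s → V) (c : V) :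
    EndsWithAdjRun G z (Fin.snoc w c) ↔ G.Adj z c ∨ (c = z ∧ EndsWithAdjRun G z w) := by
  constructor
  · rintro ⟨i, hrun, hadj⟩
    induction i using Fin.lastCases with
    | last => exact Or.inl (by simpa using hadj)
    | cast i =>
      refine Or.inr ⟨by simpa using hrun _ (Fin.castSucc_lt_last i), i, fun j hj => ?_,
        by simpa using hadj⟩
      simpa using hrun j.castSucc (Fin.castSucc_lt_castSucc_iff.mpr hj)
  · rintro (hadj | ⟨rfl, i, hrun, hadj⟩)
    · exact ⟨Fin.last s, fun j hj => absurd hj (Fin.le_last j).not_gt, by simpa using hadj⟩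
    · refine ⟨i.castSucc, fun j hj => ?_, by simpa using hadj⟩
      induction j using Fin.lastCases with
      | last => simp
      | cast j => simpa using hrun j (Fin.castSucc_lt_castSucc_iff.mp hj)

lemma endsWithAdjRun_snoc_and_not {x y : V} (hxy : G.Adj x y) {s : ℕ} (w : Fin s → V) (c : V) :
    (EndsWithAdjRun G y (Fin.snoc w c) ∧ ¬ EndsWithAdjRun G x (Fin.snoc w c)) ↔
      (G.Adj y c ∧ ¬ G.Adj x c ∧ c ≠ x) ∨ (c = x ∧ ¬ EndsWithAdjRun G x w) := by
  rw [endsWithAdjRun_snoc, endsWithAdjRun_snoc]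
  by_cases hc : c = x
  · subst hc
    simp [hxy.symm]
  · simp only [hc, false_and, or_false, ne_eq, not_false_eq_true, and_true]
    refine and_congr_left fun hxc => or_iff_left ?_
    rintro ⟨rfl, -⟩
    exact hxc hxy

variable [Fintype V] [DecidableEq V]

lemma card_filter_of_snoc {s : ℕ} (P : (Fin (s + 1) → V) → Prop) [DecidablePred P]
    (A : V → Prop) [DecidablePred A] (B : (Fin s → V) → Prop) [DecidablePred B] {z : V}
    (hz : ¬ A z) (hP : ∀ w c, P (Fin.snoc w c) ↔ A c ∨ (c = z ∧ B w)) :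
    #{w | P w} = #{c | A c} * Fintype.card V ^ s + #{w | B w} := by
  have hsplit : ({p : V × (Fin s → V) | A p.1 ∨ (p.1 = z ∧ B p.2)} : Finset _) =
      (({c | A c} : Finset V) ×ˢ (univ : Finset (Fin s → V))).disjUnion
        (({z} : Finset V) ×ˢ ({w | B w} : Finset (Fin s → V)))
        (by simp only [Finset.disjoint_left, Finset.mem_product]; grind) := by
    ext ⟨c, w⟩
    simp [and_comm, eq_comm]
  calc #{w | P w}
      = #({p : V × (Fin s → V) | A p.1 ∨ (p.1 = z ∧ B p.2)} : Finset _) :=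
        (Finset.card_equiv (Fin.snocEquiv fun _ => V) fun p => by
          simp only [mem_filter, mem_univ, true_and]; exact (hP p.2 p.1).symm).symm
    _ = #{c | A c} * Fintype.card V ^ s + #{w | B w} := by
        rw [hsplit, Finset.card_disjUnion, Finset.card_product, Finset.card_product]
        simp

variable [DecidableRel G.Adj]

lemma card_endsWithAdjRun (z : V) (s : ℕ) :
    #{w : Fin s → V | EndsWithAdjRun G z w} = G.degree z * psi (Fintype.card V) s := by
  induction s with
  | zero => simp [EndsWithAdjRun, psi]
  | succ s ih =>
    rw [card_filter_of_snoc _ (G.Adj z) _ (G.irrefl) (endsWithAdjRun_snoc G z), ih,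
      ← G.neighborFinset_eq_filter, G.card_neighborFinset_eq_degree, psi, psi,
      Finset.sum_range_succ]
    ring

lemma card_not_endsWithAdjRun (z : V) (s : ℕ) :
    (#{w : Fin s → V | ¬ EndsWithAdjRun G z w} : ℤ) =
      Fintype.card V ^ s - G.degree z * psi (Fintype.card V) s := by
  have := Finset.card_filter_add_card_filter_not (s := univ) (EndsWithAdjRun G z (s := s))
  rw [card_endsWithAdjRun, Finset.card_univ, Fintype.card_fun, Fintype.card_fin] at this
  rw [eq_sub_iff_add_eq, add_comm]
  exact_mod_cast this

lemma card_adj_not_adj_ne_add_tau {x y : V} (hxy : G.Adj x y) :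
    #{c | G.Adj y c ∧ ¬ G.Adj x c ∧ c ≠ x} + (tau G x y + 1) = G.degree y := by
  have hfilter : ({c | G.Adj y c ∧ ¬ G.Adj x c ∧ c ≠ x} : Finset V) =
      G.neighborFinset y \ insert x (G.neighborFinset x) := by
    ext c
    simp [not_or, and_comm]
  have hinter : G.neighborFinset y ∩ insert x (G.neighborFinset x) =
      insert x (G.neighborFinset x ∩ G.neighborFinset y) := by
    rw [Finset.inter_insert_of_mem (by simpa using hxy.symm), Finset.inter_comm]
  rw [hfilter, tau, ← Finset.card_insert_of_notMem (a := x)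
    (s := G.neighborFinset x ∩ G.neighborFinset y) (by simp), ← hinter,
    Finset.card_sdiff_add_card_inter, G.card_neighborFinset_eq_degree]

lemma card_endsWithAdjRun_and_not {x y : V} (hxy : G.Adj x y) (s : ℕ) :
    (#{w : Fin (s + 1) → V | EndsWithAdjRun G y w ∧ ¬ EndsWithAdjRun G x w} : ℤ) =
      (Fintype.card V : ℤ) ^ s * ((G.degree y : ℤ) - tau G x y) -
        psi (Fintype.card V) s * G.degree x := by
  rw [card_filter_of_snoc _ (fun c => G.Adj y c ∧ ¬ G.Adj x c ∧ c ≠ x) _ (by simp)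
    (endsWithAdjRun_snoc_and_not G hxy)]
  have hA :
      (#{c | G.Adj y c ∧ ¬ G.Adj x c ∧ c ≠ x} : ℤ) + (tau G x y + 1) = G.degree y := by
    exact_mod_cast card_adj_not_adj_ne_add_tau G hxy
  push_cast
  rw [card_not_endsWithAdjRun]
  linear_combination (Fintype.card V : ℤ) ^ s * hA

end Words

section Sierpinski

variable {V : Type*} (G : SimpleGraph V)

/-- The neighbour `w z c ⋯ c` of `u = w c z ⋯ z` across the copy of `{c, z}` at position `i`. -/
def sierpinskiFlip {m : ℕ} (u : Fin (m + 1) → V) (i : Fin (m + 1)) : Fin (m + 1) → V :=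
  fun j => if j < i then u j else if j = i then u (Fin.last m) else u i

lemma sierpinskiGraph_adj_iff_of_init_eq {m : ℕ} {u v : Fin (m + 1) → V}
    (h : Fin.init u = Fin.init v) :
    (sierpinskiGraph G (m + 1)).Adj u v ↔ G.Adj (u (Fin.last m)) (v (Fin.last m)) := by
  constructor
  · rintro ⟨i, -, hne, hadj, -⟩
    induction i using Fin.lastCases with
    | last => exact hadj
    | cast i => exact absurd (congrFun h i) hne
  · intro hadj
    refine ⟨Fin.last m, fun j hj => ?_, hadj.ne, hadj,
      fun j hj => absurd hj (Fin.le_last j).not_gt⟩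
    obtain ⟨j, rfl⟩ := Fin.exists_castSucc_eq.mpr hj.ne
    exact congrFun h j

lemma sierpinskiGraph_adj_iff_of_init_ne {m : ℕ} {u v : Fin (m + 1) → V}
    (h : Fin.init u ≠ Fin.init v) :
    (sierpinskiGraph G (m + 1)).Adj u v ↔ ∃ i : Fin m,
      ((∀ j, i < j → Fin.init u j = u (Fin.last m)) ∧
        G.Adj (u (Fin.last m)) (Fin.init u i)) ∧
        v = sierpinskiFlip u i.castSucc := by
  constructor
  · rintro ⟨i, hpre, hne, hadj, hpost⟩
    induction i using Fin.lastCases with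
    | last => exact absurd (funext fun j => hpre _ (Fin.castSucc_lt_last j)) h
    | cast i =>
      have hvi : v i.castSucc = u (Fin.last m) := ((hpost _ (Fin.castSucc_lt_last i)).1).symm
      refine ⟨i, ⟨fun j hj => ?_, (hvi ▸ hadj).symm⟩, funext fun j => ?_⟩
      · exact ((hpost _ (Fin.castSucc_lt_castSucc_iff.mpr hj)).1).trans hvi
      · rcases lt_trichotomy j i.castSucc with hj | rfl | hj
        · simp [sierpinskiFlip, hj, hpre j hj]
        · simp [sierpinskiFlip, hvi]
        · simp [sierpinskiFlip, hj.not_gt, hj.ne', (hpost j hj).2]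
  · rintro ⟨i, ⟨hrun, hadj⟩, rfl⟩
    refine ⟨i.castSucc, fun j hj => by simp [sierpinskiFlip, hj], ?_, ?_, fun j hj => ?_⟩
    · simpa [sierpinskiFlip, Fin.init] using hadj.ne'
    · simpa [sierpinskiFlip, Fin.init] using hadj.symm
    · refine ⟨?_, by simp [sierpinskiFlip, hj.not_gt, hj.ne']⟩
      induction j using Fin.lastCases with
      | last => simp [sierpinskiFlip]
      | cast j =>
        simpa [sierpinskiFlip, Fin.init] using hrun j (Fin.castSucc_lt_castSucc_iff.mp hj)

variable [Fintype V] [DecidableEq V] [DecidableRel G.Adj]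

lemma sierpinskiGraph_degree {m : ℕ} (u : Fin (m + 1) → V) :
    (sierpinskiGraph G (m + 1)).degree u = G.degree (u (Fin.last m)) +
      if EndsWithAdjRun G (u (Fin.last m)) (Fin.init u) then 1 else 0 := by
  rw [← SimpleGraph.card_neighborFinset_eq_degree,
    ← Finset.card_filter_add_card_filter_not (p := fun v => Fin.init u = Fin.init v)]
  congr 1
  · rw [← G.card_neighborFinset_eq_degree]
    refine Finset.card_nbij' (fun v => v (Fin.last m)) (Fin.snoc (Fin.init u)) ?_ ?_ ?_ ?_
    · intro v hv
      simp only [coe_filter, SimpleGraph.mem_neighborFinset, Set.mem_ofPred_eq,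
        SimpleGraph.coe_neighborFinset, SimpleGraph.mem_neighborSet] at hv ⊢
      exact (sierpinskiGraph_adj_iff_of_init_eq G hv.2).mp hv.1
    · intro z hz
      simp only [SimpleGraph.coe_neighborFinset, SimpleGraph.mem_neighborSet, coe_filter,
        SimpleGraph.mem_neighborFinset, Set.mem_ofPred_eq, Fin.init_snoc, and_true] at hz ⊢
      exact (sierpinskiGraph_adj_iff_of_init_eq G (by rw [Fin.init_snoc])).mpr
        (by simpa using hz)
    · intro v hv
      simp only [coe_filter, Set.mem_ofPred_eq] at hv
      rw [hv.2, Fin.snoc_init_self]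
    · intro z _
      simp
  · split_ifs with hrun
    · obtain ⟨i, hi⟩ := hrun
      rw [Finset.card_eq_one]
      refine ⟨sierpinskiFlip u i.castSucc, Finset.ext fun v => ?_⟩
      simp only [mem_filter, SimpleGraph.mem_neighborFinset, mem_singleton]
      constructor
      · rintro ⟨hadj, hne⟩
        obtain ⟨i', hi', rfl⟩ := (sierpinskiGraph_adj_iff_of_init_ne G hne).mp hadj
        rw [endsWithAdjRun_index_unique G hi' hi]
      · rintro rfl
        have hne : Fin.init u ≠ Fin.init (sierpinskiFlip u i.castSucc) := fun h =>
          hi.2.ne (by simpa [sierpinskiFlip, Fin.init] using (congrFun h i).symm)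
        exact ⟨(sierpinskiGraph_adj_iff_of_init_ne G hne).mpr ⟨i, hi, rfl⟩, hne⟩
    · rw [Finset.card_eq_zero, Finset.filter_eq_empty_iff]
      intro v hv hne
      obtain ⟨i, hi, -⟩ := (sierpinskiGraph_adj_iff_of_init_ne G hne).mp (by simpa using hv)
      exact hrun ⟨i, hi⟩

end Sierpinski

section Copies

variable {V : Type*} (G : SimpleGraph V)

lemma isCopy_snoc (x y : V) {s : ℕ} (w : Fin s → V) :
    isCopy x y (Fin.snoc w x) (Fin.snoc w y) :=
  ⟨Fin.last s, fun j hj => by obtain ⟨j, rfl⟩ := Fin.exists_castSucc_eq.mpr hj.ne; simp,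
    by simp, by simp, fun j hj => absurd hj (Fin.le_last j).not_gt⟩

lemma isCopy.init_eq_or_endsWithAdjRun {x y : V} (hxy : G.Adj x y) {m : ℕ}
    {u v : Fin (m + 1) → V} (h : isCopy x y u v) :
    (Fin.init u = Fin.init v ∧ u (Fin.last m) = x ∧ v (Fin.last m) = y) ∨
      (u (Fin.last m) = y ∧ v (Fin.last m) = x ∧
        EndsWithAdjRun G y (Fin.init u) ∧ EndsWithAdjRun G x (Fin.init v)) := by
  obtain ⟨i, hpre, hu, hv, hpost⟩ := h
  induction i using Fin.lastCases with
  | last => exact Or.inl ⟨funext fun j => hpre _ (Fin.castSucc_lt_last j), hu, hv⟩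
  | cast i =>
    have hpost' j (hj : i < j) := hpost j.castSucc (Fin.castSucc_lt_castSucc_iff.mpr hj)
    obtain ⟨huy, hvx⟩ := hpost _ (Fin.castSucc_lt_last i)
    exact Or.inr ⟨huy, hvx,
      ⟨i, fun j hj => (hpost' j hj).1, (hu ▸ hxy.symm : G.Adj y (u i.castSucc))⟩,
      ⟨i, fun j hj => (hpost' j hj).2, (hv ▸ hxy : G.Adj x (v i.castSucc))⟩⟩

variable [Fintype V] [DecidableEq V] [DecidableRel G.Adj]

lemma copyCount_degree_degree_succ {x y : V} (hxy : G.Adj x y) (s : ℕ) :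
    copyCount G (s + 1) x y (G.degree x) (G.degree y + 1) =
      #{w : Fin s → V | EndsWithAdjRun G y w ∧ ¬ EndsWithAdjRun G x w} := by
  have hinj : Function.Injective fun w : Fin s → V =>
      ((Fin.snoc w x : Fin (s + 1) → V), (Fin.snoc w y : Fin (s + 1) → V)) :=
    fun w w' h => by simpa using congrArg (Fin.init ∘ Prod.fst) h
  rw [copyCount, ← Finset.card_image_of_injective _ hinj]
  congr 1
  ext ⟨u, v⟩
  simp only [mem_filter, mem_univ, true_and, mem_image, Prod.mk.injEq]
  constructor
  · rintro ⟨hcopy, hdu, hdv⟩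
    rw [sierpinskiGraph_degree] at hdu hdv
    rcases hcopy.init_eq_or_endsWithAdjRun G hxy with ⟨hinit, hu, hv⟩ | ⟨hu, hv, hyu, hxv⟩
    · rw [hu] at hdu
      rw [hv, ← hinit] at hdv
      refine ⟨Fin.init u, ⟨by_contra fun h => ?_, fun h => ?_⟩, ?_, ?_⟩
      · simp [h] at hdv
      · simp [h] at hdu
      · rw [← hu, Fin.snoc_init_self]
      · rw [hinit, ← hv, Fin.snoc_init_self]
    · rw [hu, if_pos hyu] at hdu
      rw [hv, if_pos hxv] at hdv
      omega
  · rintro ⟨w, ⟨hy, hx⟩, rfl, rfl⟩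
    refine ⟨isCopy_snoc x y w, ?_, ?_⟩
    · rw [sierpinskiGraph_degree, Fin.snoc_last, Fin.init_snoc, if_neg hx, add_zero]
    · rw [sierpinskiGraph_degree, Fin.snoc_last, Fin.init_snoc, if_pos hy]

end Copies

theorem copyCount_deg_degSucc_general {n : ℕ} (G : SimpleGraph (Fin n))
    [DecidableRel G.Adj] (x y : Fin n) (hxy : G.Adj x y) (t : ℕ) (ht : 2 ≤ t) :
    (copyCount G t x y (G.degree x) (G.degree y + 1) : ℤ) =
      (n : ℤ) ^ (t - 2) * ((G.degree y : ℤ) - tau G x y) - psi n (t - 2) * G.degree x := by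
  obtain ⟨s, rfl⟩ : ∃ s, t = s + 2 := ⟨t - 2, by omega⟩
  rw [copyCount_degree_degree_succ G hxy, card_endsWithAdjRun_and_not G hxy, Fintype.card_fin,
    Nat.add_sub_cancel]

theorem copyCount_deg_degSucc {n : ℕ} (hn : 2 ≤ n) (G : SimpleGraph (Fin n))
    [DecidableRel G.Adj] (x y : Fin n) (hxy : G.Adj x y) (t : ℕ) (ht : 2 ≤ t) :
    (copyCount G t x y (G.degree x) (G.degree y + 1) : ℤ) =
      (n : ℤ) ^ (t - 2) * ((G.degree y : ℤ) - tau G x y) - psi n (t - 2) * G.degree x :=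
  copyCount_deg_degSucc_general G x y hxy t ht
end

section
/- Let G = (V,E) be a graph of order n ≥ 2, let α be a real number and let t ≥ 2 be an integer. Then R_α(S(G,t)) = Σ_{{x,y}∈E} W_{{x,y}}, where W_{{x,y}} = n^{t−2}(n − d(x) − d(y) + τ(x,y))·d(x)^α d(y)^α + (n^{t−2}(d(y) − τ(x,y)) − ψ(t−2)d(x))·d(x)^α (d(y)+1)^α + (n^{t−2}(d(x) − τ(x,y)) − ψ(t−2)d(y))·(d(x)+1)^α d(y)^α + (n^{t−2}(τ(x,y) + 1) + ψ(t−2)(d(x) + d(y) + 1))·(d(x)+1)^α (d(y)+1)^α. -/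
open Finset

/-- The contribution `W_{{x,y}}` of the edge `{x,y}` of `G` to `R_α(S(G,t))`. -/
noncomputable def Wedge {V : Type*} [Fintype V] [DecidableEq V] (G : SimpleGraph V)
    [DecidableRel G.Adj] (n t : ℕ) (α : ℝ) (x y : V) : ℝ :=
  (n : ℝ) ^ (t - 2) * ((n : ℝ) - G.degree x - G.degree y + tau G x y) *
      ((G.degree x : ℝ) ^ α * (G.degree y : ℝ) ^ α) +
    ((n : ℝ) ^ (t - 2) * ((G.degree y : ℝ) - tau G x y) - (psi n (t - 2) : ℝ) * G.degree x) *
      ((G.degree x : ℝ) ^ α * ((G.degree y : ℝ) + 1) ^ α) +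
    ((n : ℝ) ^ (t - 2) * ((G.degree x : ℝ) - tau G x y) - (psi n (t - 2) : ℝ) * G.degree y) *
      (((G.degree x : ℝ) + 1) ^ α * (G.degree y : ℝ) ^ α) +
    ((n : ℝ) ^ (t - 2) * ((tau G x y : ℝ) + 1) +
        (psi n (t - 2) : ℝ) * ((G.degree x : ℝ) + G.degree y + 1)) *
      (((G.degree x : ℝ) + 1) ^ α * ((G.degree y : ℝ) + 1) ^ α)

lemma Wedge_comm {V : Type*} [Fintype V] [DecidableEq V] (G : SimpleGraph V)
    [DecidableRel G.Adj] (n t : ℕ) (α : ℝ) (x y : V) :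
    Wedge G n t α x y = Wedge G n t α y x := by
  unfold Wedge
  rw [tau_comm]
  ring


/-!
An edge of `S(G,t)` is determined by the first position where its ends differ, their common
prefix `w` before it and an edge `xy` of `G`: the ends are `w x y⋯y` and `w y x⋯x` (`edgeWord`).
A word `u` has `d(u_t)` neighbours that differ from it only in the last letter, and exactly one
more if `u` ends with a neighbour of `u_t` followed by a run of `u_t` (`EndsWithNeighborRun`).
So if the ends of an edge over `xy` differ before the last letter, their degrees are `d(y) + 1`
and `d(x) + 1`, and there are `ψ(t-1)` such edges. If they differ only in the last letter, the
degrees are `d(x) + ε_x(w)` and `d(y) + ε_y(w)`; `ε_x = 1` for `d(x) ψ(t-1)` prefixes `w`, and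
`ε_x = ε_y = 1` for `τ(x,y) n^(t-2) + (d(x) + d(y)) ψ(t-2)` of them (split by the last letter of
`w`), so inclusion–exclusion over the four values of `(ε_x, ε_y)` gives `W_{xy}`.
-/

theorem Finset.sum_ite_ite {ι R : Type*} [CommRing R] (s : Finset ι) (p q : ι → Prop)
    [DecidablePred p] [DecidablePred q] (a b c d : R) :
    ∑ i ∈ s, (if p i then (if q i then a else b) else (if q i then c else d)) =
      #{i ∈ s | p i ∧ q i} * a + (#{i ∈ s | p i} - #{i ∈ s | p i ∧ q i}) * b +
        (#{i ∈ s | q i} - #{i ∈ s | p i ∧ q i}) * c +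
        (#s - #{i ∈ s | p i} - #{i ∈ s | q i} + #{i ∈ s | p i ∧ q i}) * d := by
  have h : ∀ i, (if p i then (if q i then a else b) else (if q i then c else d)) =
      d + (if p i then b - d else 0) + (if q i then c - d else 0) +
        (if p i ∧ q i then a - b - c + d else 0) := by
    intro i
    split_ifs <;> simp_all
    ring
  simp only [h, sum_add_distrib, ← sum_filter, sum_const, nsmul_eq_mul]
  ring

lemma Fintype.card_filter_fun_fin_succ {V : Type*} [Fintype V] {m : ℕ}
    (p : (Fin (m + 1) → V) → Prop) [DecidablePred p] :
    #{u | p u} = ∑ c, #{w : Fin m → V | p (Fin.snoc w c)} := by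
  simp only [card_filter]
  rw [← (Fin.snocEquiv fun _ => V).sum_comp, Fintype.sum_prod_type]
  rfl

lemma Fintype.card_filter_fun_const {V : Type*} [Fintype V] {m : ℕ} (p : Prop) [Decidable p] :
    #{_w : Fin m → V | p} = if p then Fintype.card V ^ m else 0 := by
  split_ifs with hp <;> simp [hp]

lemma psi_succ (n m : ℕ) : psi n (m + 1) = psi n m + n ^ m := sum_range_succ _ _

lemma SimpleGraph.card_filter_adj_eq_degree {V : Type*} [Fintype V] (G : SimpleGraph V)
    [DecidableRel G.Adj] (x : V) : #{c | G.Adj c x} = G.degree x := by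
  simp [← card_neighborFinset_eq_degree, neighborFinset_eq_filter, G.adj_comm]

theorem SimpleGraph.sum_darts_edge {V M : Type*} [Fintype V] [DecidableEq V] [AddCommMonoid M]
    (G : SimpleGraph V) [DecidableRel G.Adj] (f : Sym2 V → M) :
    ∑ d : G.Dart, f d.edge = 2 • ∑ e ∈ G.edgeFinset, f e := by
  rw [← Finset.sum_fiberwise_of_maps_to (g := SimpleGraph.Dart.edge) (t := G.edgeFinset)
    (fun d _ => by simp), Finset.smul_sum]
  refine Finset.sum_congr rfl fun e he => ?_
  rw [Finset.sum_congr rfl (fun d hd => by rw [(Finset.mem_filter.1 hd).2]), Finset.sum_const,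
    G.dart_edge_fiber_card e (G.mem_edgeFinset.1 he)]

section EdgeWord

variable {V : Type*} {G : SimpleGraph V} {t : ℕ}

def edgeWord (i : Fin t) (w : Fin i → V) (x y : V) : Fin t → V :=
  fun j => if h : (j : ℕ) < i then w ⟨j, h⟩ else if j = i then x else y

section

variable (i : Fin t) (w : Fin i → V) {x y : V}

lemma edgeWord_of_lt {j : Fin t} (h : j < i) : edgeWord i w x y j = w ⟨j, h⟩ := dif_pos h

@[simp]
lemma edgeWord_self : edgeWord i w x y i = x := by simp [edgeWord]

lemma edgeWord_of_gt {j : Fin t} (h : i < j) : edgeWord i w x y j = y := by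
  simp [edgeWord, h.ne', Fin.lt_def.not.2 h.not_gt]

lemma edgeWord_castSucc :
    edgeWord i.castSucc w x y = Fin.snoc (edgeWord i w x y) y := by
  ext j
  induction j using Fin.lastCases with
  | last => simp [edgeWord_of_gt _ _ (Fin.castSucc_lt_last i)]
  | cast j =>
    rcases lt_trichotomy j i with hj | rfl | hj
    · simp [edgeWord_of_lt _ _ hj, edgeWord_of_lt _ _ (Fin.castSucc_lt_castSucc_iff.2 hj)]
    · simp
    · simp [edgeWord_of_gt _ _ hj, edgeWord_of_gt _ _ (Fin.castSucc_lt_castSucc_iff.2 hj)]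

lemma sierpinskiGraph_adj_edgeWord (hxy : G.Adj x y) :
    (sierpinskiGraph G t).Adj (edgeWord i w x y) (edgeWord i w y x) :=
  ⟨i, fun j hj => by simp [edgeWord_of_lt _ _ hj], by simpa using hxy.ne, by simpa,
    fun j hj => by simp [edgeWord_of_gt _ _ hj]⟩

lemma edgeWord_apply_eq_swap_iff (hxy : x ≠ y) (j : Fin t) :
    edgeWord i w x y j = edgeWord i w y x j ↔ j < i := by
  rcases lt_trichotomy j i with hj | rfl | hj
  · simp [edgeWord_of_lt _ _ hj, hj]
  · simpa using hxy
  · simp [edgeWord_of_gt _ _ hj, hxy.symm, hj.not_gt]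

end

lemma edgeWord_last (w : Fin t → V) (x y : V) : edgeWord (Fin.last t) w x y = Fin.snoc w x := by
  ext j
  induction j using Fin.lastCases with
  | last => simp
  | cast j => simp [edgeWord_of_lt _ _ (Fin.castSucc_lt_last j)]

lemma eq_edgeWord_of_adj_at {u v : Fin t → V} {i : Fin t} (hlt : ∀ j < i, u j = v j)
    (hgt : ∀ j, i < j → u j = v i ∧ v j = u i) :
    u = edgeWord i (Fin.take i i.isLt.le u) (u i) (v i) ∧
      v = edgeWord i (Fin.take i i.isLt.le u) (v i) (u i) := by
  constructor <;> ext j <;> rcases lt_trichotomy j i with hj | rfl | hj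
  · simp [edgeWord_of_lt _ _ hj, Fin.take_apply]
  · simp
  · simp [edgeWord_of_gt _ _ hj, (hgt j hj).1]
  · simp [edgeWord_of_lt _ _ hj, Fin.take_apply, hlt j hj]
  · simp
  · simp [edgeWord_of_gt _ _ hj, (hgt j hj).2]

variable (G t) in
def sierpinskiDart (p : (Σ i : Fin t, (Fin i → V)) × G.Dart) : (sierpinskiGraph G t).Dart :=
  ⟨(edgeWord p.1.1 p.1.2 p.2.fst p.2.snd, edgeWord p.1.1 p.1.2 p.2.snd p.2.fst),
    sierpinskiGraph_adj_edgeWord p.1.1 p.1.2 p.2.adj⟩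

lemma sierpinskiDart_injective : Function.Injective (sierpinskiDart G t) := by
  rintro ⟨⟨i, w⟩, d⟩ ⟨⟨i', w'⟩, d'⟩ h
  obtain ⟨hu, hv⟩ : edgeWord i w d.fst d.snd = edgeWord i' w' d'.fst d'.snd ∧
      edgeWord i w d.snd d.fst = edgeWord i' w' d'.snd d'.fst :=
    Prod.mk.inj (congrArg SimpleGraph.Dart.toProd h)
  obtain rfl : i = i' := by
    have key : ∀ j, j < i ↔ j < i' := fun j => by
      rw [← edgeWord_apply_eq_swap_iff i w d.adj.ne,
        ← edgeWord_apply_eq_swap_iff i' w' d'.adj.ne, hu, hv]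
    rcases lt_trichotomy i i' with hi | hi | hi
    · exact absurd ((key i).2 hi) (lt_irrefl i)
    · exact hi
    · exact absurd ((key i').1 hi) (lt_irrefl i')
  obtain rfl : w = w' := funext fun k => by
    simpa [edgeWord_of_lt _ _ (show (⟨k, k.isLt.trans i.isLt⟩ : Fin t) < i from k.isLt)]
      using congrFun hu ⟨k, k.isLt.trans i.isLt⟩
  have hx := congrFun hu i
  have hy := congrFun hv i
  simp only [edgeWord_self] at hx hy
  ext <;> simp [hx, hy]

lemma sierpinskiDart_surjective : Function.Surjective (sierpinskiDart G t) := by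
  rintro ⟨⟨u, v⟩, i, hlt, -, hadj, hgt⟩
  obtain ⟨hu, hv⟩ := eq_edgeWord_of_adj_at hlt hgt
  exact ⟨⟨⟨i, Fin.take i i.isLt.le u⟩, ⟨(u i, v i), hadj⟩⟩,
    SimpleGraph.Dart.ext _ _ (Prod.ext hu.symm hv.symm)⟩

end EdgeWord

section Degree

variable {V : Type*} (G : SimpleGraph V)

def EndsWithNeighborRun (x : V) {m : ℕ} (w : Fin m → V) : Prop :=
  ∃ j, G.Adj (w j) x ∧ ∀ k, j < k → w k = x

instance [DecidableEq V] [DecidableRel G.Adj] (x : V) {m : ℕ} (w : Fin m → V) :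
    Decidable (EndsWithNeighborRun G x w) := by
  unfold EndsWithNeighborRun; infer_instance

variable {G} {m : ℕ}

lemma le_of_adj_of_run {w : Fin m → V} {x : V} {j j' : Fin m} (hj : G.Adj (w j) x)
    (hrun : ∀ k, j' < k → w k = x) : j ≤ j' :=
  le_of_not_gt fun h => G.irrefl (hrun j h ▸ hj)

lemma snoc_eq_edgeWord_of_run {w : Fin m → V} {x : V} {j : Fin m}
    (hrun : ∀ k, j < k → w k = x) :
    Fin.snoc w x = edgeWord j.castSucc (Fin.take j j.isLt.le w) (w j) x := by
  ext k
  induction k using Fin.lastCases with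
  | last => simp [edgeWord_of_gt _ _ (Fin.castSucc_lt_last j)]
  | cast k =>
    rcases lt_trichotomy k j with hk | rfl | hk
    · simp [edgeWord_of_lt _ _ (Fin.castSucc_lt_castSucc_iff.2 hk), Fin.take_apply]
    · simp
    · simp [edgeWord_of_gt _ _ (Fin.castSucc_lt_castSucc_iff.2 hk), hrun k hk]

lemma sierpinskiGraph_adj_snoc_snoc_iff {w : Fin m → V} {x : V} (c : V) :
    (sierpinskiGraph G (m + 1)).Adj (Fin.snoc w x) (Fin.snoc w c) ↔ G.Adj x c := by
  constructor
  · rintro ⟨i, -, hne, hadj, -⟩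
    induction i using Fin.lastCases with
    | last => simpa using hadj
    | cast i => simp at hne
  · intro h
    refine ⟨Fin.last m, fun j hj => ?_, by simpa using h.ne, by simpa, fun j hj => ?_⟩
    · obtain ⟨j, rfl⟩ := Fin.exists_castSucc_eq.2 hj.ne
      simp
    · exact absurd hj (Fin.le_last j).not_gt

lemma exists_run_of_sierpinskiGraph_adj {w : Fin m → V} {x : V} {v : Fin (m + 1) → V}
    (h : (sierpinskiGraph G (m + 1)).Adj (Fin.snoc w x) v) (hv : Fin.init v ≠ w) :
    ∃ j, G.Adj (w j) x ∧ (∀ k, j < k → w k = x) ∧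
      v = edgeWord j.castSucc (Fin.take j j.isLt.le w) x (w j) := by
  obtain ⟨i, hlt, -, hadj, hgt⟩ := h
  induction i using Fin.lastCases with
  | last =>
    refine absurd (funext fun k => ?_) hv
    simpa [Fin.init] using (hlt k.castSucc k.castSucc_lt_last).symm
  | cast j =>
    obtain ⟨hx, -⟩ := hgt (Fin.last m) (Fin.castSucc_lt_last j)
    simp only [Fin.snoc_last, Fin.snoc_castSucc] at hx hadj
    refine ⟨j, hx ▸ hadj, fun k hk => ?_, ?_⟩
    · simpa [hx] using (hgt k.castSucc (Fin.castSucc_lt_castSucc_iff.2 hk)).1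
    · rw [(eq_edgeWord_of_adj_at hlt hgt).2, ← hx]
      congr 1
      · ext k
        rw [Fin.take_apply, Fin.take_apply]
        exact Fin.snoc_castSucc (α := fun _ => V) (i := Fin.castLE j.isLt.le k) ..
      · simp

lemma endsWithNeighborRun_snoc_self {x : V} (w : Fin m → V) :
    EndsWithNeighborRun G x (Fin.snoc w x) ↔ EndsWithNeighborRun G x w := by
  constructor
  · rintro ⟨j, hadj, hrun⟩
    induction j using Fin.lastCases with
    | last => simp at hadj
    | cast j =>
      exact ⟨j, by simpa using hadj, fun k hk => by
        simpa using hrun k.castSucc (Fin.castSucc_lt_castSucc_iff.2 hk)⟩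
  · rintro ⟨j, hadj, hrun⟩
    refine ⟨j.castSucc, by simpa using hadj, fun k hk => ?_⟩
    induction k using Fin.lastCases with
    | last => simp
    | cast k => simpa using hrun k (Fin.castSucc_lt_castSucc_iff.1 hk)

lemma endsWithNeighborRun_snoc_of_ne {x c : V} (hc : c ≠ x) (w : Fin m → V) :
    EndsWithNeighborRun G x (Fin.snoc w c) ↔ G.Adj c x := by
  constructor
  · rintro ⟨j, hadj, hrun⟩
    induction j using Fin.lastCases with
    | last => simpa using hadj
    | cast j => exact absurd (by simpa using hrun _ (Fin.castSucc_lt_last j)) hc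
  · exact fun h => ⟨Fin.last m, by simpa, fun k hk => absurd hk (Fin.le_last k).not_gt⟩

variable [Fintype V] [DecidableEq V] [DecidableRel G.Adj]

lemma card_neighborFinset_snoc_filter_init_eq (w : Fin m → V) (x : V) :
    #{v ∈ (sierpinskiGraph G (m + 1)).neighborFinset (Fin.snoc w x) | Fin.init v = w} =
      G.degree x := by
  rw [← SimpleGraph.card_neighborFinset_eq_degree, ← (G.neighborFinset x).card_map
    ⟨Fin.snoc (α := fun _ => V) w, Fin.snoc_right_injective (α := fun _ => V) w⟩]
  congr 1
  ext v
  simp only [mem_filter, SimpleGraph.mem_neighborFinset, mem_map, Function.Embedding.coeFn_mk]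
  constructor
  · rintro ⟨h, rfl⟩
    exact ⟨v (Fin.last m), by rwa [← sierpinskiGraph_adj_snoc_snoc_iff, Fin.snoc_init_self],
      Fin.snoc_init_self v⟩
  · rintro ⟨c, hc, rfl⟩
    exact ⟨sierpinskiGraph_adj_snoc_snoc_iff c |>.2 hc, Fin.init_snoc (α := fun _ => V) ..⟩

lemma card_neighborFinset_snoc_filter_init_ne (w : Fin m → V) (x : V) :
    #{v ∈ (sierpinskiGraph G (m + 1)).neighborFinset (Fin.snoc w x) | Fin.init v ≠ w} =
      if EndsWithNeighborRun G x w then 1 else 0 := by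
  split_ifs with hw
  · obtain ⟨j, hadj, hrun⟩ := hw
    rw [card_eq_one]
    refine ⟨edgeWord j.castSucc (Fin.take j j.isLt.le w) x (w j), ?_⟩
    ext v
    simp only [mem_filter, SimpleGraph.mem_neighborFinset, mem_singleton]
    constructor
    · rintro ⟨h, hv⟩
      obtain ⟨j', hadj', hrun', rfl⟩ := exists_run_of_sierpinskiGraph_adj h hv
      obtain rfl := le_antisymm (le_of_adj_of_run hadj' hrun) (le_of_adj_of_run hadj hrun')
      rfl
    · rintro rfl
      refine ⟨snoc_eq_edgeWord_of_run hrun ▸ sierpinskiGraph_adj_edgeWord _ _ hadj,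
        fun h => hadj.ne ?_⟩
      simpa [Fin.init] using (congrFun h j).symm
  · rw [card_eq_zero, filter_eq_empty_iff]
    intro v hv hinit
    obtain ⟨j, hadj, hrun, -⟩ :=
      exists_run_of_sierpinskiGraph_adj ((SimpleGraph.mem_neighborFinset _ _ _).1 hv) hinit
    exact hw ⟨j, hadj, hrun⟩

variable (G) in
theorem sierpinskiGraph_degree_snoc (w : Fin m → V) (x : V) :
    (sierpinskiGraph G (m + 1)).degree (Fin.snoc w x) =
      G.degree x + if EndsWithNeighborRun G x w then 1 else 0 := by
  rw [← SimpleGraph.card_neighborFinset_eq_degree,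
    ← card_filter_add_card_filter_not (fun v => Fin.init v = w),
    card_neighborFinset_snoc_filter_init_eq, card_neighborFinset_snoc_filter_init_ne]

end Degree

section Count

variable {V : Type*} [Fintype V] [DecidableEq V] {G : SimpleGraph V} [DecidableRel G.Adj]

variable (G) in
theorem card_endsWithNeighborRun (x : V) (m : ℕ) :
    #{w : Fin m → V | EndsWithNeighborRun G x w} = G.degree x * psi (Fintype.card V) m := by
  induction m with
  | zero => simp [EndsWithNeighborRun, psi]
  | succ m ih =>
    have hc : ∀ c, #{w : Fin m → V | EndsWithNeighborRun G x (Fin.snoc w c)} =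
        (if c = x then G.degree x * psi (Fintype.card V) m else 0) +
          if G.Adj c x then Fintype.card V ^ m else 0 := by
      intro c
      by_cases hcx : c = x
      · subst hcx
        simp [endsWithNeighborRun_snoc_self, ih]
      · simp only [endsWithNeighborRun_snoc_of_ne hcx, Fintype.card_filter_fun_const, hcx,
          if_false, zero_add]
    simp only [Fintype.card_filter_fun_fin_succ, hc, sum_add_distrib, sum_ite_eq', mem_univ,
      if_true, ← sum_filter, sum_const, smul_eq_mul]
    rw [G.card_filter_adj_eq_degree, psi_succ]
    ring

lemma card_filter_adj_and_adj_eq_tau (x y : V) :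
    #{c | G.Adj c x ∧ G.Adj c y} = tau G x y := by
  rw [tau, SimpleGraph.neighborFinset_eq_filter, SimpleGraph.neighborFinset_eq_filter,
    ← filter_and]
  simp [G.adj_comm]

theorem card_endsWithNeighborRun_and {x y : V} (hxy : G.Adj x y) (m : ℕ) :
    #{w : Fin (m + 1) → V | EndsWithNeighborRun G x w ∧ EndsWithNeighborRun G y w} =
      tau G x y * Fintype.card V ^ m + (G.degree x + G.degree y) * psi (Fintype.card V) m := by
  have hc : ∀ c, #{w : Fin m → V |
      EndsWithNeighborRun G x (Fin.snoc w c) ∧ EndsWithNeighborRun G y (Fin.snoc w c)} =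
        (if c = x then G.degree x * psi (Fintype.card V) m else 0) +
          (if c = y then G.degree y * psi (Fintype.card V) m else 0) +
          if G.Adj c x ∧ G.Adj c y then Fintype.card V ^ m else 0 := by
    intro c
    by_cases hcx : c = x
    · subst hcx
      simp [endsWithNeighborRun_snoc_self, endsWithNeighborRun_snoc_of_ne hxy.ne, hxy,
        hxy.ne, card_endsWithNeighborRun]
    by_cases hcy : c = y
    · subst hcy
      simp [endsWithNeighborRun_snoc_self, endsWithNeighborRun_snoc_of_ne hxy.ne', hxy.symm,
        hxy.ne', card_endsWithNeighborRun]
    simp only [endsWithNeighborRun_snoc_of_ne hcx, endsWithNeighborRun_snoc_of_ne hcy,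
      Fintype.card_filter_fun_const, hcx, hcy, if_false, zero_add]
  simp only [Fintype.card_filter_fun_fin_succ, hc, sum_add_distrib, sum_ite_eq', mem_univ, if_true,
    ← sum_filter, sum_const, smul_eq_mul, card_filter_adj_and_adj_eq_tau]
  ring

end Count

section Fiber

variable {V : Type*} [Fintype V] [DecidableEq V] {G : SimpleGraph V} [DecidableRel G.Adj]
  {m : ℕ} {x y : V}

lemma sierpinskiGraph_degree_edgeWord_castSucc (hxy : G.Adj x y) (i : Fin m) (w : Fin i → V) :
    (sierpinskiGraph G (m + 1)).degree (edgeWord i.castSucc w x y) = G.degree y + 1 := by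
  rw [edgeWord_castSucc, sierpinskiGraph_degree_snoc, if_pos]
  exact ⟨i, by simpa, fun j hj => edgeWord_of_gt _ _ hj⟩

lemma sierpinskiGraph_degree_edgeWord_last (w : Fin m → V) :
    (sierpinskiGraph G (m + 1)).degree (edgeWord (Fin.last m) w x y) =
      G.degree x + if EndsWithNeighborRun G x w then 1 else 0 := by
  rw [edgeWord_last, sierpinskiGraph_degree_snoc]

theorem sum_degree_edgeWord_rpow (hxy : G.Adj x y) (α : ℝ) :
    ∑ p : Σ i : Fin (m + 2), (Fin i → V),
      (((sierpinskiGraph G (m + 2)).degree (edgeWord p.1 p.2 x y) : ℝ) *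
        (sierpinskiGraph G (m + 2)).degree (edgeWord p.1 p.2 y x)) ^ α =
      Wedge G (Fintype.card V) (m + 2) α x y := by
  -- The prefix types `Fin ↑i.castSucc` and `Fin ↑(Fin.last (m + 1))` are spelled as
  -- `Fin.sum_univ_castSucc` produces them, so that `hinner` and `hlast` rewrite syntactically.
  have hinner : ∑ i : Fin (m + 1), ∑ w : Fin (i.castSucc : Fin (m + 2)) → V,
      (((sierpinskiGraph G (m + 2)).degree (edgeWord i.castSucc w x y) : ℝ) *
        (sierpinskiGraph G (m + 2)).degree (edgeWord i.castSucc w y x)) ^ α =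
      psi (Fintype.card V) (m + 1) * (((G.degree x + 1) * (G.degree y + 1) : ℕ) : ℝ) ^ α := by
    simp only [sierpinskiGraph_degree_edgeWord_castSucc hxy,
      sierpinskiGraph_degree_edgeWord_castSucc hxy.symm, sum_const, card_univ, Fintype.card_fun,
      Fintype.card_fin, nsmul_eq_mul, ← sum_mul, psi, Nat.cast_sum,
      Fin.val_castSucc, Fin.sum_univ_eq_sum_range (fun i => ((Fintype.card V ^ i : ℕ) : ℝ))]
    push_cast
    ring_nf
  have hlast : ∑ w : Fin (Fin.last (m + 1) : ℕ) → V,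
      (((sierpinskiGraph G (m + 2)).degree (edgeWord (Fin.last (m + 1)) w x y) : ℝ) *
        (sierpinskiGraph G (m + 2)).degree (edgeWord (Fin.last (m + 1)) w y x)) ^ α =
      ∑ w : Fin (m + 1) → V, if EndsWithNeighborRun G x w then
        (if EndsWithNeighborRun G y w then (((G.degree x + 1) * (G.degree y + 1) : ℕ) : ℝ) ^ α
          else (((G.degree x + 1) * G.degree y : ℕ) : ℝ) ^ α)
        else (if EndsWithNeighborRun G y w then ((G.degree x * (G.degree y + 1) : ℕ) : ℝ) ^ α
          else ((G.degree x * G.degree y : ℕ) : ℝ) ^ α) := by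
    refine sum_congr rfl fun w _ => ?_
    rw [sierpinskiGraph_degree_edgeWord_last, sierpinskiGraph_degree_edgeWord_last]
    split_ifs <;> simp
  rw [Fintype.sum_sigma, Fin.sum_univ_castSucc]
  dsimp only
  rw [hinner, hlast, sum_ite_ite, card_endsWithNeighborRun_and hxy, card_endsWithNeighborRun,
    card_endsWithNeighborRun, card_univ, Fintype.card_fun, Fintype.card_fin, Wedge,
    Nat.add_sub_cancel, psi_succ]
  simp only [Nat.cast_mul, Nat.cast_add, Nat.cast_one, Nat.cast_pow]
  rw [Real.mul_rpow (by positivity) (by positivity), Real.mul_rpow (by positivity) (by positivity),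
    Real.mul_rpow (by positivity) (by positivity), Real.mul_rpow (by positivity) (by positivity)]
  ring

end Fiber

lemma two_mul_randic {V : Type*} [Fintype V] [DecidableEq V] (H : SimpleGraph V)
    [DecidableRel H.Adj] (α : ℝ) :
    2 * randic H α = ∑ d : H.Dart, ((H.degree d.fst : ℝ) * H.degree d.snd) ^ α := by
  have h : randic H α = ∑ e ∈ H.edgeFinset,
      Sym2.lift ⟨fun u v => ((H.degree u : ℝ) * H.degree v) ^ α,
        fun u v => by simp only [mul_comm]⟩ e := by
    -- `randic` chooses its decidability instances classically.
    unfold randic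
    congr!
  rw [h, two_mul, ← two_nsmul, ← H.sum_darts_edge]
  rfl

theorem randic_sierpinskiGraph {V : Type*} [Fintype V] [DecidableEq V] (G : SimpleGraph V)
    [DecidableRel G.Adj] (α : ℝ) (m : ℕ) :
    randic (sierpinskiGraph G (m + 2)) α = ∑ e ∈ G.edgeFinset,
      Sym2.lift ⟨Wedge G (Fintype.card V) (m + 2) α,
        Wedge_comm G (Fintype.card V) (m + 2) α⟩ e := by
  refine mul_left_cancel₀ (two_ne_zero (α := ℝ)) ?_
  rw [two_mul_randic, two_mul, ← two_nsmul, ← G.sum_darts_edge,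
    ← (Equiv.ofBijective _ ⟨sierpinskiDart_injective, sierpinskiDart_surjective⟩).sum_comp,
    Fintype.sum_prod_type_right]
  exact Fintype.sum_congr _ _ fun d => sum_degree_edgeWord_rpow d.adj α

theorem randic_sierpinski_general {n : ℕ} (G : SimpleGraph (Fin n)) [DecidableRel G.Adj]
    (α : ℝ) (t : ℕ) (ht : 2 ≤ t) :
    randic (sierpinskiGraph G t) α =
      ∑ e ∈ G.edgeFinset, Sym2.lift ⟨Wedge G n t α, Wedge_comm G n t α⟩ e := by
  obtain ⟨m, rfl⟩ : ∃ m, t = m + 2 := ⟨t - 2, by omega⟩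
  simpa only [Fintype.card_fin] using randic_sierpinskiGraph G α m

theorem randic_sierpinski {n : ℕ} (hn : 2 ≤ n) (G : SimpleGraph (Fin n)) [DecidableRel G.Adj]
    (α : ℝ) (t : ℕ) (ht : 2 ≤ t) :
    randic (sierpinskiGraph G t) α =
      ∑ e ∈ G.edgeFinset, Sym2.lift ⟨Wedge G n t α, Wedge_comm G n t α⟩ e :=
  randic_sierpinski_general G α t ht
end
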